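/- Let ρ > 0 and define S(t) = Σ_{k=1}^{∞} (t / k^{ρ})^{k} for t ≥ 0. Then for every fixed t > 0, liminf_{θ → ∞} ( log log S(θ t) ) / ( log θ ) ≥ 1/ρ. -/
import Mathlib

open Filter Real Topology

private lemma xlog_le (x v : ℝ) (hx : 0 < x) (hv : 0 < v) :
    x * Real.log (v / x) ≤ v / Real.exp 1 := by
  have he : (0:ℝ) < Real.exp 1 := Real.exp_pos 1
  have h1 : Real.log (v / x) ≤ v / (x * Real.exp 1) := by
    have hrw : v / x = (v / (x * Real.exp 1)) * Real.exp 1 := by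
      field_simp
    rw [hrw, Real.log_mul (by positivity) (Real.exp_ne_zero 1), Real.log_exp]
    have := Real.log_le_sub_one_of_pos (show (0:ℝ) < v / (x * Real.exp 1) by positivity)
    linarith
  have h2 : x * Real.log (v / x) ≤ x * (v / (x * Real.exp 1)) :=
    mul_le_mul_of_nonneg_left h1 hx.le
  have h3 : x * (v / (x * Real.exp 1)) = v / Real.exp 1 := by
    field_simp
  linarith

private lemma term_bound (ρ u : ℝ) (hρ : 0 < ρ) (hu : 0 < u) (k : ℕ) :
    (u / ((k : ℝ) + 1) ^ ρ) ^ (k + 1) ≤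
      Real.exp (ρ * (2 * u) ^ (1/ρ) / Real.exp 1) * (1/2 : ℝ) ^ (k + 1) := by
  set x : ℝ := (k : ℝ) + 1 with hxdef
  have hx : 0 < x := by positivity
  have hxρ : 0 < x ^ ρ := Real.rpow_pos_of_pos hx ρ
  have hb : 0 < 2 * u / x ^ ρ := by positivity
  have hv : 0 < (2 * u) ^ (1/ρ) := Real.rpow_pos_of_pos (by positivity) _
  have key : (2 * u / x ^ ρ) ^ (k + 1) ≤ Real.exp (ρ * (2 * u) ^ (1/ρ) / Real.exp 1) := by
    have h1 : (2 * u / x ^ ρ) ^ (k + 1) = Real.exp (x * Real.log (2 * u / x ^ ρ)) := by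
      conv_lhs => rw [← Real.exp_log hb]
      rw [← Real.exp_nat_mul]
      congr 1
      push_cast [hxdef]
      ring
    rw [h1]
    apply Real.exp_le_exp.2
    have h2 : x * Real.log (2 * u / x ^ ρ) = ρ * (x * Real.log ((2 * u) ^ (1/ρ) / x)) := by
      rw [Real.log_div (by positivity) (ne_of_gt hxρ),
        Real.log_div (ne_of_gt hv) (ne_of_gt hx),
        Real.log_rpow (by positivity : (0:ℝ) < x),
        Real.log_rpow (by positivity : (0:ℝ) < 2 * u)]
      field_simp
    rw [h2]
    have h4 := mul_le_mul_of_nonneg_left (xlog_le x _ hx hv) hρ.le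
    calc ρ * (x * Real.log ((2 * u) ^ (1/ρ) / x)) ≤ ρ * ((2 * u) ^ (1/ρ) / Real.exp 1) := h4
      _ = ρ * (2 * u) ^ (1/ρ) / Real.exp 1 := by ring
  have hsplit : (u / x ^ ρ) ^ (k + 1) = (2 * u / x ^ ρ) ^ (k + 1) * (1/2 : ℝ) ^ (k + 1) := by
    rw [← mul_pow]
    congr 1
    field_simp
  rw [hsplit]
  exact mul_le_mul_of_nonneg_right key (by positivity)

private lemma summable_bound (ρ u : ℝ) :
    Summable (fun k : ℕ => Real.exp (ρ * (2 * u) ^ (1/ρ) / Real.exp 1) * (1/2 : ℝ) ^ (k + 1)) := by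
  have hg : Summable (fun k : ℕ => (1/2 : ℝ) ^ k) :=
    summable_geometric_of_lt_one (by norm_num) (by norm_num)
  refine (hg.mul_left (Real.exp (ρ * (2 * u) ^ (1/ρ) / Real.exp 1) * (1/2 : ℝ))).congr
    fun k => ?_
  rw [pow_succ]
  ring

private lemma summable_terms (ρ u : ℝ) (hρ : 0 < ρ) (hu : 0 < u) :
    Summable (fun k : ℕ => (u / ((k : ℝ) + 1) ^ ρ) ^ (k + 1)) :=
  Summable.of_nonneg_of_le (fun k => by positivity) (term_bound ρ u hρ hu)
    (summable_bound ρ u)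

private lemma tsum_half_pow : (∑' k : ℕ, (1/2 : ℝ) ^ (k + 1)) = 1 := by
  have hg : (∑' k : ℕ, (1/2 : ℝ) ^ k) = 2 := by
    rw [tsum_geometric_of_lt_one (by norm_num) (by norm_num)]
    norm_num
  calc (∑' k : ℕ, (1/2 : ℝ) ^ (k + 1)) = ∑' k : ℕ, (1/2 : ℝ) ^ k * (1/2) :=
        tsum_congr fun k => pow_succ _ _
    _ = (∑' k : ℕ, (1/2 : ℝ) ^ k) * (1/2) := tsum_mul_right
    _ = 1 := by rw [hg]; norm_num

private lemma tendsto_lin_div_log (C a : ℝ) :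
    Tendsto (fun θ : ℝ => (C + a * Real.log θ) / Real.log θ) atTop (𝓝 a) := by
  have h0 : Tendsto (fun θ : ℝ => C / Real.log θ + a) atTop (𝓝 (0 + a)) :=
    (tendsto_const_nhds.div_atTop Real.tendsto_log_atTop).add tendsto_const_nhds
  rw [zero_add] at h0
  refine h0.congr' ?_
  filter_upwards [eventually_gt_atTop (1:ℝ)] with θ hθ
  have hl : Real.log θ ≠ 0 := ne_of_gt (Real.log_pos hθ)
  field_simp

/-- Lemma 2.13: for `ρ > 0`, let `S(t) = Σ_{k=1}^∞ (t / k^ρ)^k`. Then for every fixed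
`t > 0`, `liminf_{θ → ∞} (log log S(θ t)) / (log θ) ≥ 1/ρ`. -/
theorem liminf_log_log_series_ge
    (ρ : ℝ) (hρ : 0 < ρ)
    (S : ℝ → ℝ)
    (hS : ∀ u : ℝ, S u = ∑' k : ℕ, (u / ((k : ℝ) + 1) ^ ρ) ^ (k + 1))
    (t : ℝ) (ht : 0 < t) :
    1 / ρ ≤ Filter.liminf
      (fun θ : ℝ => Real.log (Real.log (S (θ * t))) / Real.log θ) Filter.atTop := by
  have hρ' : (0:ℝ) < 1/ρ := by positivity
  -- upper bound on S
  have hSub : ∀ u : ℝ, 0 < u → S u ≤ Real.exp (ρ * (2 * u) ^ (1/ρ) / Real.exp 1) := by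
    intro u hu
    rw [hS u]
    calc (∑' k : ℕ, (u / ((k : ℝ) + 1) ^ ρ) ^ (k + 1))
        ≤ ∑' k : ℕ, Real.exp (ρ * (2 * u) ^ (1/ρ) / Real.exp 1) * (1/2 : ℝ) ^ (k + 1) :=
          Summable.tsum_le_tsum (term_bound ρ u hρ hu) (summable_terms ρ u hρ hu) (summable_bound ρ u)
      _ = Real.exp (ρ * (2 * u) ^ (1/ρ) / Real.exp 1) * ∑' k : ℕ, (1/2 : ℝ) ^ (k + 1) :=
          tsum_mul_left
      _ = Real.exp (ρ * (2 * u) ^ (1/ρ) / Real.exp 1) := by rw [tsum_half_pow, mul_one]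
  -- lower bound on log S
  have hSlb : ∀ u : ℝ, 0 < u → 2 ≤ (u/2) ^ (1/ρ) →
      Real.log 2 / 2 * (u/2) ^ (1/ρ) ≤ Real.log (S u) := by
    intro u hu hv2
    set v : ℝ := (u/2) ^ (1/ρ) with hvdef
    have hv : 0 < v := Real.rpow_pos_of_pos (by positivity) _
    set m : ℕ := ⌊v⌋₊ with hmdef
    have hm2 : 2 ≤ m := Nat.le_floor (by exact_mod_cast hv2)
    have hmv : (m : ℝ) ≤ v := Nat.floor_le hv.le
    have hm_half : v / 2 ≤ (m : ℝ) := by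
      have := Nat.sub_one_lt_floor v
      rw [← hmdef] at this
      linarith
    have hmpos : (0:ℝ) < m := by positivity
    have hmρ : (m:ℝ) ^ ρ ≤ u / 2 := by
      calc (m:ℝ) ^ ρ ≤ v ^ ρ := Real.rpow_le_rpow hmpos.le hmv hρ.le
        _ = (u/2) ^ ((1/ρ) * ρ) := by rw [hvdef, ← Real.rpow_mul (by positivity)]
        _ = u / 2 := by rw [one_div, inv_mul_cancel₀ (ne_of_gt hρ), Real.rpow_one]
    have hmρpos : (0:ℝ) < (m:ℝ) ^ ρ := Real.rpow_pos_of_pos hmpos _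
    have h2le : (2:ℝ) ≤ u / (m:ℝ) ^ ρ := by
      rw [le_div_iff₀ hmρpos]
      linarith
    set k : ℕ := m - 1 with hkdef
    have hk1 : k + 1 = m := by omega
    have hterm : (2:ℝ) ^ m ≤ (u / ((k : ℝ) + 1) ^ ρ) ^ (k + 1) := by
      have hc : ((k : ℝ) + 1) = (m : ℝ) := by
        rw [hkdef]
        push_cast [Nat.cast_sub (by omega : 1 ≤ m)]
        ring
      rw [hc, hk1]
      exact pow_le_pow_left₀ (by norm_num) h2le m
    have hSge : (2:ℝ) ^ m ≤ S u := by
      rw [hS u]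
      exact hterm.trans (Summable.le_tsum (summable_terms ρ u hρ hu) k fun j _ => by positivity)
    have hlog : (m : ℝ) * Real.log 2 ≤ Real.log (S u) := by
      have := Real.log_le_log (by positivity) hSge
      rwa [Real.log_pow] at this
    have hlog2 : (0:ℝ) < Real.log 2 := Real.log_pos (by norm_num)
    calc Real.log 2 / 2 * v = v / 2 * Real.log 2 := by ring
      _ ≤ (m : ℝ) * Real.log 2 := mul_le_mul_of_nonneg_right hm_half hlog2.le
      _ ≤ Real.log (S u) := hlog
  -- squeeze
  set C_low : ℝ := Real.log (Real.log 2 / 2) + (1/ρ) * (Real.log t - Real.log 2) with hClow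
  set C_hi : ℝ := Real.log (ρ / Real.exp 1) + (1/ρ) * (Real.log 2 + Real.log t) with hChi
  have hA : Tendsto (fun θ : ℝ => (θ * t / 2) ^ (1/ρ)) atTop atTop :=
    (tendsto_rpow_atTop hρ').comp
      ((tendsto_id.atTop_mul_const ht).atTop_div_const (by norm_num))
  have hlog2 : (0:ℝ) < Real.log 2 := Real.log_pos (by norm_num)
  have hmain : Tendsto (fun θ : ℝ => Real.log (Real.log (S (θ * t))) / Real.log θ)
      atTop (𝓝 (1/ρ)) := by
    refine tendsto_of_tendsto_of_tendsto_of_le_of_le'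
      (tendsto_lin_div_log C_low (1/ρ)) (tendsto_lin_div_log C_hi (1/ρ)) ?_ ?_
    · -- lower
      filter_upwards [eventually_gt_atTop (1:ℝ), hA.eventually_ge_atTop 2] with θ hθ hv2
      have hθ0 : (0:ℝ) < θ := lt_trans one_pos hθ
      have hu : (0:ℝ) < θ * t := by positivity
      set v : ℝ := (θ * t / 2) ^ (1/ρ) with hvdef
      have hv : 0 < v := Real.rpow_pos_of_pos (by positivity) _
      have h1 : Real.log 2 / 2 * v ≤ Real.log (S (θ * t)) := hSlb (θ * t) hu hv2
      have h2 : Real.log (Real.log 2 / 2 * v) ≤ Real.log (Real.log (S (θ * t))) :=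
        Real.log_le_log (by positivity) h1
      have e1 : Real.log v = (1/ρ) * (Real.log θ + Real.log t - Real.log 2) := by
        rw [hvdef, Real.log_rpow (by positivity),
          Real.log_div (ne_of_gt hu) (by norm_num : (2:ℝ) ≠ 0),
          Real.log_mul (ne_of_gt hθ0) (ne_of_gt ht)]
      have h3 : Real.log (Real.log 2 / 2 * v) = C_low + (1/ρ) * Real.log θ := by
        rw [Real.log_mul (by positivity) (ne_of_gt hv), e1, hClow]
        ring
      rw [h3] at h2
      have hlogθ : 0 < Real.log θ := Real.log_pos hθ
      exact div_le_div_of_nonneg_right h2 hlogθ.le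
    · -- upper
      filter_upwards [eventually_gt_atTop (1:ℝ), hA.eventually_ge_atTop 2] with θ hθ hv2
      have hθ0 : (0:ℝ) < θ := lt_trans one_pos hθ
      have hu : (0:ℝ) < θ * t := by positivity
      have hv : 0 < ((θ * t / 2) ^ (1/ρ) : ℝ) := Real.rpow_pos_of_pos (by positivity) _
      have hlogSpos : 0 < Real.log (S (θ * t)) := by
        have := hSlb (θ * t) hu hv2
        nlinarith
      have hSpos : 0 < S (θ * t) := by
        rw [hS]
        refine lt_of_lt_of_le ?_
          (Summable.le_tsum (summable_terms ρ (θ * t) hρ hu) 0 fun j _ => by positivity)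
        positivity
      have h1 : Real.log (S (θ * t)) ≤ ρ / Real.exp 1 * (2 * (θ * t)) ^ (1/ρ) := by
        have hb := hSub (θ * t) hu
        have h := Real.log_le_log hSpos hb
        rw [Real.log_exp] at h
        calc Real.log (S (θ * t)) ≤ ρ * (2 * (θ * t)) ^ (1/ρ) / Real.exp 1 := h
          _ = ρ / Real.exp 1 * (2 * (θ * t)) ^ (1/ρ) := by ring
      have hw : (0:ℝ) < (2 * (θ * t)) ^ (1/ρ) := Real.rpow_pos_of_pos (by positivity) _
      have h2 : Real.log (Real.log (S (θ * t))) ≤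
          Real.log (ρ / Real.exp 1 * (2 * (θ * t)) ^ (1/ρ)) :=
        Real.log_le_log hlogSpos h1
      have e2 : Real.log ((2 * (θ * t)) ^ (1/ρ)) =
          (1/ρ) * (Real.log 2 + (Real.log θ + Real.log t)) := by
        rw [Real.log_rpow (by positivity),
          Real.log_mul (by norm_num : (2:ℝ) ≠ 0) (ne_of_gt hu),
          Real.log_mul (ne_of_gt hθ0) (ne_of_gt ht)]
      have h3 : Real.log (ρ / Real.exp 1 * (2 * (θ * t)) ^ (1/ρ)) =
          C_hi + (1/ρ) * Real.log θ := by
        rw [Real.log_mul (by positivity) (ne_of_gt hw), e2, hChi]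
        ring
      rw [h3] at h2
      have hlogθ : 0 < Real.log θ := Real.log_pos hθ
      exact div_le_div_of_nonneg_right h2 hlogθ.le
  rw [hmain.liminf_eq]
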